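/- Let Q_k(n,L;η) be the monic polynomials in η defined by Q_{−1}=0, Q_0=1 and Q_{k+1}(n,L;η) = η Q_k(n,L;η) − h_k(n,L) Q_{k−1}(n,L;η), with h_k(n,L) = k(2L+k+1)(2n−k+2)(2L+2n−k+3)/(4(2n−2k+1)(2n−2k+3)). Then for all k ≥ 0: Q_k(n,L;η) = α_k(n,L) Q_k(n−1,L;η) + β_k(n,L) η Q_{k−1}(n−1,L;η), where α_k(n,L) = 2(2n−2k+1)(L+n+1)/((2n−k+1)(2L+2n−k+2)) and β_k(n,L) = k(2L+k+1)/((2n−k+1)(2L+2n−k+2)). -/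

import Mathlib

/- Both sides satisfy the same three-term recurrence in `k`: expanding `Q_{k+2}(n)` and
`Q_{k+2}(n-1)` by the recurrence and using the descent identity at `k` and `k+1`, the step
reduces to three identities between the coefficients,
`α_k + β_k = 1`, `h_{k+1}(n) α_k(n) = α_{k+2}(n) h_{k+1}(n-1)` and
`h_{k+1}(n) β_k(n) = β_{k+1}(n) h_k(n-1)`, each a rational-function identity. -/

/-- α_k(n,L) = 2(2n-2k+1)(L+n+1) / ((2n-k+1)(2L+2n-k+2)). -/
noncomputable def alphF (k n L : ℝ) : ℝ :=
  2 * (2*n - 2*k + 1) * (L + n + 1) / ((2*n - k + 1) * (2*L + 2*n - k + 2))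

/-- β_k(n,L) = k(2L+k+1) / ((2n-k+1)(2L+2n-k+2)). -/
noncomputable def betF (k n L : ℝ) : ℝ :=
  k * (2*L + k + 1) / ((2*n - k + 1) * (2*L + 2*n - k + 2))

/-- h_k(n,L) = k(2L+k+1)(2n-k+2)(2L+2n-k+3) / (4(2n-2k+1)(2n-2k+3)). -/
noncomputable def hF (k n L : ℝ) : ℝ :=
  k * (2*L + k + 1) * (2*n - k + 2) * (2*L + 2*n - k + 3) /
    (4 * (2*n - 2*k + 1) * (2*n - 2*k + 3))

/-- The monic polynomials Q_k(n,L;η): Q₀ = 1, Q₁ = η (from Q_{-1} = 0) and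
Q_{k+1} = η Q_k - h_k(n,L) Q_{k-1}. -/
noncomputable def Qpoly (n L : ℝ) : ℕ → ℝ → ℝ
  | 0, _ => 1
  | 1, η => η
  | (k + 2), η => η * Qpoly n L (k + 1) η - hF ((k : ℝ) + 1) n L * Qpoly n L k η

def DenomsNeZero (n L : ℝ) (j : ℕ) : Prop :=
  2*n - 2*(j:ℝ) + 1 ≠ 0 ∧ 2*n - 2*(j:ℝ) + 3 ≠ 0 ∧
    2*(n-1) - 2*(j:ℝ) + 1 ≠ 0 ∧ 2*(n-1) - 2*(j:ℝ) + 3 ≠ 0 ∧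
    2*n - (j:ℝ) + 1 ≠ 0 ∧ 2*L + 2*n - (j:ℝ) + 2 ≠ 0

lemma hF_zero (n L : ℝ) : hF 0 n L = 0 := by
  simp [hF]

lemma betF_zero (n L : ℝ) : betF 0 n L = 0 := by
  simp [betF]

-- `k - 1` truncates at `k = 0`, harmlessly since `h₀ = 0`.
lemma Qpoly_succ (n L η : ℝ) (k : ℕ) :
    Qpoly n L (k + 1) η = η * Qpoly n L k η - hF k n L * Qpoly n L (k - 1) η := by
  cases k with
  | zero => simp [Qpoly, hF_zero]
  | succ k => rw [Qpoly]; push_cast; rfl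

lemma alphF_add_betF {x n L : ℝ} (h₁ : 2*n - x + 1 ≠ 0) (h₂ : 2*L + 2*n - x + 2 ≠ 0) :
    alphF x n L + betF x n L = 1 := by
  unfold alphF betF
  rw [← add_div, div_eq_one_iff_eq (mul_ne_zero h₁ h₂)]
  ring

lemma hF_mul_alphF {x n L : ℝ}
    (h₁ : 2*n - 2*(x+1) + 1 ≠ 0) (h₂ : 2*n - 2*(x+1) + 3 ≠ 0)
    (h₃ : 2*(n-1) - 2*(x+1) + 1 ≠ 0) (h₄ : 2*(n-1) - 2*(x+1) + 3 ≠ 0)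
    (h₅ : 2*n - x + 1 ≠ 0) (h₆ : 2*L + 2*n - x + 2 ≠ 0)
    (h₇ : 2*n - (x+2) + 1 ≠ 0) (h₈ : 2*L + 2*n - (x+2) + 2 ≠ 0) :
    hF (x+1) n L * alphF x n L = alphF (x+2) n L * hF (x+1) (n-1) L := by
  unfold hF alphF
  rw [div_mul_div_comm, div_mul_div_comm, div_eq_div_iff (by simp [*]) (by simp [*])]
  ring

lemma hF_mul_betF {x n L : ℝ}
    (h₁ : 2*n - 2*(x+1) + 1 ≠ 0) (h₂ : 2*n - 2*(x+1) + 3 ≠ 0)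
    (h₃ : 2*(n-1) - 2*x + 1 ≠ 0) (h₄ : 2*(n-1) - 2*x + 3 ≠ 0)
    (h₅ : 2*n - x + 1 ≠ 0) (h₆ : 2*L + 2*n - x + 2 ≠ 0)
    (h₇ : 2*n - (x+1) + 1 ≠ 0) (h₈ : 2*L + 2*n - (x+1) + 2 ≠ 0) :
    hF (x+1) n L * betF x n L = betF (x+1) n L * hF x (n-1) L := by
  unfold hF betF
  rw [div_mul_div_comm, div_mul_div_comm, div_eq_div_iff (by simp [*]) (by simp [*])]
  ring

lemma Qpoly_descent_step {n L η : ℝ} {k : ℕ}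
    (hden : ∀ j : ℕ, j ≤ k + 2 → DenomsNeZero n L j)
    (ih₀ : Qpoly n L k η =
      alphF k n L * Qpoly (n-1) L k η + betF k n L * η * Qpoly (n-1) L (k - 1) η)
    (ih₁ : Qpoly n L (k + 1) η =
      alphF (k + 1 : ℕ) n L * Qpoly (n-1) L (k + 1) η +
        betF (k + 1 : ℕ) n L * η * Qpoly (n-1) L k η) :
    Qpoly n L (k + 2) η =
      alphF (k + 2 : ℕ) n L * Qpoly (n-1) L (k + 2) η +
        betF (k + 2 : ℕ) n L * η * Qpoly (n-1) L (k + 1) η := by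
  obtain ⟨-, -, c₀, d₀, e₀, f₀⟩ := hden k (by omega)
  obtain ⟨a₁, b₁, c₁, d₁, e₁, f₁⟩ := hden (k + 1) (by omega)
  obtain ⟨-, -, -, -, e₂, f₂⟩ := hden (k + 2) le_rfl
  have hrec := Qpoly_succ (n-1) L η k
  rw [Qpoly_succ n L η (k + 1), Qpoly_succ (n-1) L η (k + 1)]
  push_cast at *
  linear_combination η * ih₁ - hF (k + 1) n L * ih₀ - betF (k + 1) n L * η * hrec
    - Qpoly (n-1) L k η * hF_mul_alphF a₁ b₁ c₁ d₁ e₀ f₀ e₂ f₂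
    - η * Qpoly (n-1) L (k - 1) η * hF_mul_betF a₁ b₁ c₀ d₀ e₀ f₀ e₁ f₁
    + η * Qpoly (n-1) L (k + 1) η * (alphF_add_betF e₁ f₁ - alphF_add_betF e₂ f₂)

/-- For all k ≥ 0 : Q_k(n,L;η) = α_k(n,L) Q_k(n-1,L;η) + β_k(n,L) η Q_{k-1}(n-1,L;η),
whenever the denominators occurring in h_j, α_k, β_k do not vanish.  (For k = 0 the
last term vanishes since β₀ = 0.) -/
theorem stmt_13 (n L η : ℝ) (k : ℕ)
    (hden : ∀ j : ℕ, j ≤ k →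
      2*n - 2*(j:ℝ) + 1 ≠ 0 ∧ 2*n - 2*(j:ℝ) + 3 ≠ 0 ∧
      2*(n-1) - 2*(j:ℝ) + 1 ≠ 0 ∧ 2*(n-1) - 2*(j:ℝ) + 3 ≠ 0 ∧
      2*n - (j:ℝ) + 1 ≠ 0 ∧ 2*L + 2*n - (j:ℝ) + 2 ≠ 0) :
    Qpoly n L k η = alphF k n L * Qpoly (n-1) L k η +
      betF k n L * η * Qpoly (n-1) L (k - 1) η := by
  induction k using Nat.twoStepInduction with
  | zero =>
    obtain ⟨-, -, -, -, h₁, h₂⟩ := hden 0 le_rfl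
    have hα := alphF_add_betF h₁ h₂
    simp only [Nat.cast_zero, betF_zero, add_zero] at hα
    simp [Qpoly, hα, betF_zero]
  | one =>
    obtain ⟨-, -, -, -, h₁, h₂⟩ := hden 1 le_rfl
    simp only [Qpoly, Nat.sub_self]
    linear_combination -η * alphF_add_betF h₁ h₂
  | more k ih₀ ih₁ =>
    exact Qpoly_descent_step hden (ih₀ fun j hj => hden j (by omega))
      (ih₁ fun j hj => hden j (by omega))
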